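/- Let n be an even integer with n ≥ 4, let 0 < p_out < p_in < 1, τ ∈ ℝ, λ ∈ ℝ, and let m be an even integer with 2 ≤ m ≤ n − 2. Let σ⁰ ∈ {−1,1}ⁿ have its first n/2 entries +1 and last n/2 entries −1, let EA be the n×n matrix with (EA)_{ij} = p_in if σ⁰_i = σ⁰_j and p_out otherwise, EA_τ := EA − τ·1ₙ1ₙᵀ, α^MF := n(p_in − p_out)/2, and let P_L be the diagonal matrix whose first m/2 and last m/2 diagonal entries are 1 and all other entries 0. Set c₁ := n(p_in + p_out − 2τ)/2, c₂ := α^MF, and q := λ·(1 − m/n). Then the multiset of eigenvalues of EL̃ := α^MF·I − EA_τ + λ·P_L is { α^MF − t₁^+, α^MF − t₁^−, α^MF − t₂^+, α^MF − t₂^− } together with α^MF with multiplicity n − m − 2 and α^MF + λ with multiplicity m − 2, where t₁^± := (1/2)( c₁ − λ ± √( (λ + c₁)² − 4·c₁·λ·(m/n) ) ) are the two (real) roots of P₁(t) := t(t+λ) − c₁·(t + q) and t₂^± := (1/2)( c₂ − λ ± √( (λ + c₂)² − 4·c₂·λ·(m/n) ) ) are the two (real) roots of P₂(t) := t(t+λ)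 − c₂·(t + q); in particular, both discriminants (λ + c₁)² − 4·c₁·λ·(m/n) and (λ + c₂)² − 4·c₂·λ·(m/n) are nonnegative, so all listed eigenvalues are real, and t₂^± may be written as (1/2)( α^MF − λ ± √( (λ + α^MF)² − 4·α^MF·λ·(θ+η) ) ) with θ + η := m/n. -/
import Mathlib


open Matrix

noncomputable section

/-- The root `(1/2)(c − λ ± √((λ+c)² − 4cλr))` of `t(t+λ) − c(t + λ(1−r))`. -/
def eigRoot (c lam r sgn : ℝ) : ℝ :=
  (1 / 2) * (c - lam + sgn * Real.sqrt ((lam + c) ^ 2 - 4 * c * lam * r))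

/-- The quadratic `P(t) = t(t+λ) − c(t + q)`. -/
def eigQuad (c lam q t : ℝ) : ℝ := t * (t + lam) - c * (t + q)

open Polynomial Finset

lemma sum_range_segments {K : Type*} [AddCommMonoid K] (n k1 k2 k3 : ℕ)
    (h01 : k1 ≤ k2) (h23 : k2 ≤ k3) (h3n : k3 ≤ n) (F : ℕ → K) (w1 w2 w3 w4 : K)
    (H1 : ∀ i < k1, F i = w1)
    (H2 : ∀ i, k1 ≤ i → i < k2 → F i = w2)
    (H3 : ∀ i, k2 ≤ i → i < k3 → F i = w3)
    (H4 : ∀ i, k3 ≤ i → i < n → F i = w4) :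
    ∑ i ∈ Finset.range n, F i
      = k1 • w1 + (k2 - k1) • w2 + (k3 - k2) • w3 + (n - k3) • w4 := by
  rw [Finset.range_eq_Ico,
    ← Finset.sum_Ico_consecutive _ (Nat.zero_le k3) h3n,
    ← Finset.sum_Ico_consecutive _ (Nat.zero_le k2) h23,
    ← Finset.sum_Ico_consecutive _ (Nat.zero_le k1) h01]
  have e1 : ∑ i ∈ Finset.Ico 0 k1, F i = k1 • w1 := by
    rw [Finset.sum_congr rfl fun i hi => H1 i (by simpa using (Finset.mem_Ico.mp hi).2)]
    simp [Finset.sum_const]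
  have e2 : ∑ i ∈ Finset.Ico k1 k2, F i = (k2 - k1) • w2 := by
    rw [Finset.sum_congr rfl fun i hi => H2 i (Finset.mem_Ico.mp hi).1 (Finset.mem_Ico.mp hi).2]
    simp [Finset.sum_const]
  have e3 : ∑ i ∈ Finset.Ico k2 k3, F i = (k3 - k2) • w3 := by
    rw [Finset.sum_congr rfl fun i hi => H3 i (Finset.mem_Ico.mp hi).1 (Finset.mem_Ico.mp hi).2]
    simp [Finset.sum_const]
  have e4 : ∑ i ∈ Finset.Ico k3 n, F i = (n - k3) • w4 := by
    rw [Finset.sum_congr rfl fun i hi => H4 i (Finset.mem_Ico.mp hi).1 (Finset.mem_Ico.mp hi).2]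
    simp [Finset.sum_const]
  rw [e1, e2, e3, e4]

lemma prod_range_segments {K : Type*} [CommMonoid K] (n k1 k2 k3 : ℕ)
    (h01 : k1 ≤ k2) (h23 : k2 ≤ k3) (h3n : k3 ≤ n) (F : ℕ → K) (w1 w2 w3 w4 : K)
    (H1 : ∀ i < k1, F i = w1)
    (H2 : ∀ i, k1 ≤ i → i < k2 → F i = w2)
    (H3 : ∀ i, k2 ≤ i → i < k3 → F i = w3)
    (H4 : ∀ i, k3 ≤ i → i < n → F i = w4) :
    ∏ i ∈ Finset.range n, F i
      = w1 ^ k1 * w2 ^ (k2 - k1) * w3 ^ (k3 - k2) * w4 ^ (n - k3) := by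
  rw [Finset.range_eq_Ico,
    ← Finset.prod_Ico_consecutive _ (Nat.zero_le k3) h3n,
    ← Finset.prod_Ico_consecutive _ (Nat.zero_le k2) h23,
    ← Finset.prod_Ico_consecutive _ (Nat.zero_le k1) h01]
  have e1 : ∏ i ∈ Finset.Ico 0 k1, F i = w1 ^ k1 := by
    rw [Finset.prod_congr rfl fun i hi => H1 i (by simpa using (Finset.mem_Ico.mp hi).2)]
    simp [Finset.prod_const]
  have e2 : ∏ i ∈ Finset.Ico k1 k2, F i = w2 ^ (k2 - k1) := by
    rw [Finset.prod_congr rfl fun i hi => H2 i (Finset.mem_Ico.mp hi).1 (Finset.mem_Ico.mp hi).2]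
    simp [Finset.prod_const]
  have e3 : ∏ i ∈ Finset.Ico k2 k3, F i = w3 ^ (k3 - k2) := by
    rw [Finset.prod_congr rfl fun i hi => H3 i (Finset.mem_Ico.mp hi).1 (Finset.mem_Ico.mp hi).2]
    simp [Finset.prod_const]
  have e4 : ∏ i ∈ Finset.Ico k3 n, F i = w4 ^ (n - k3) := by
    rw [Finset.prod_congr rfl fun i hi => H4 i (Finset.mem_Ico.mp hi).1 (Finset.mem_Ico.mp hi).2]
    simp [Finset.prod_const]
  rw [e1, e2, e3, e4]

lemma quad_factor {R : Type*} [CommRing R] (a b s p : R) (hs : a + b = s) (hp : a * b = p) :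
    (X - C a) * (X - C b) = X ^ 2 - C s * X + C p := by
  rw [← hs, ← hp, map_add, _root_.map_mul]; ring

lemma disc_nonneg (c lam r : ℝ) (hr0 : 0 ≤ r) (hr1 : r ≤ 1) :
    0 ≤ (lam + c) ^ 2 - 4 * c * lam * r := by
  nlinarith [sq_nonneg (lam + c), sq_nonneg (lam - c), mul_nonneg hr0 (sq_nonneg (lam - c)),
    mul_nonneg (sub_nonneg.mpr hr1) (sq_nonneg (lam + c))]

lemma eigRoot_add (c lam r : ℝ) : eigRoot c lam r 1 + eigRoot c lam r (-1) = c - lam := by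
  simp [eigRoot]; ring

lemma eigRoot_mul (c lam r : ℝ) (hr0 : 0 ≤ r) (hr1 : r ≤ 1) :
    eigRoot c lam r 1 * eigRoot c lam r (-1) = c * lam * (r - 1) := by
  have hs := Real.sq_sqrt (disc_nonneg c lam r hr0 hr1)
  unfold eigRoot
  linear_combination (-(1:ℝ)/4) * hs

lemma eigQuad_eigRoot (c lam r : ℝ) (hr0 : 0 ≤ r) (hr1 : r ≤ 1) (sgn : ℝ)
    (h : sgn = 1 ∨ sgn = -1) :
    eigQuad c lam (lam * (1 - r)) (eigRoot c lam r sgn) = 0 := by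
  have hs := Real.sq_sqrt (disc_nonneg c lam r hr0 hr1)
  rcases h with rfl | rfl <;>
  · unfold eigQuad eigRoot
    linear_combination ((1:ℝ)/4) * hs


set_option maxHeartbeats 2000000 in
/-- **Corollary 3 (spectrum of the mean-field matrix `EL̃`).** With the `m` labeled
nodes split evenly between the two clusters, the eigenvalues of
`EL̃ = α^MF·I − EA_τ + λ·P_L` (with multiplicity, i.e. the roots of its
characteristic polynomial) are `α^MF − t₁^±`, `α^MF − t₂^±`, `α^MF` with
multiplicity `n−m−2` and `α^MF + λ` with multiplicity `m−2`; both discriminants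
are nonnegative, `t₁^±` are the roots of `P₁(t) = t(t+λ) − c₁(t+q)` and `t₂^±`
the roots of `P₂(t) = t(t+λ) − c₂(t+q)` with `q = λ(1 − m/n)`, and
`t₂^± = (1/2)(α^MF − λ ± √((λ+α^MF)² − 4α^MF·λ(θ+η)))` with `θ + η = m/n`. -/
theorem meanField_Ltilde_spectrum
    (n m : ℕ) (hn4 : 4 ≤ n) (hneven : Even n) (hmeven : Even m)
    (hm2 : 2 ≤ m) (hmn : m ≤ n - 2)
    (pin pout τ lam : ℝ)
    (hpout : 0 < pout) (hp : pout < pin) (hpin : pin < 1)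
    (σ0 : Fin n → ℝ)
    (hσ0 : ∀ i : Fin n, σ0 i = if (i : ℕ) < n / 2 then 1 else -1) :
    (Matrix.charpoly
        (((n : ℝ) * (pin - pout) / 2) • (1 : Matrix (Fin n) (Fin n) ℝ)
          - Matrix.of (fun i j => (if σ0 i = σ0 j then pin else pout) - τ)
          + lam • Matrix.diagonal (fun i : Fin n =>
              if (i : ℕ) < m / 2 ∨ n - m / 2 ≤ (i : ℕ) then (1 : ℝ) else 0))).roots
      = Multiset.replicate (n - m - 2) ((n : ℝ) * (pin - pout) / 2)
        + Multiset.replicate (m - 2) ((n : ℝ) * (pin - pout) / 2 + lam)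
        + { (n : ℝ) * (pin - pout) / 2
              - eigRoot ((n : ℝ) * (pin + pout - 2 * τ) / 2) lam ((m : ℝ) / (n : ℝ)) 1,
            (n : ℝ) * (pin - pout) / 2
              - eigRoot ((n : ℝ) * (pin + pout - 2 * τ) / 2) lam ((m : ℝ) / (n : ℝ)) (-1),
            (n : ℝ) * (pin - pout) / 2
              - eigRoot ((n : ℝ) * (pin - pout) / 2) lam ((m : ℝ) / (n : ℝ)) 1,
            (n : ℝ) * (pin - pout) / 2
              - eigRoot ((n : ℝ) * (pin - pout) / 2) lam ((m : ℝ) / (n : ℝ)) (-1) }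
    ∧
    (0 ≤ (lam + (n : ℝ) * (pin + pout - 2 * τ) / 2) ^ 2
        - 4 * ((n : ℝ) * (pin + pout - 2 * τ) / 2) * lam * ((m : ℝ) / (n : ℝ))
      ∧ 0 ≤ (lam + (n : ℝ) * (pin - pout) / 2) ^ 2
        - 4 * ((n : ℝ) * (pin - pout) / 2) * lam * ((m : ℝ) / (n : ℝ)))
    ∧
    (∀ sgn : ℝ, sgn = 1 ∨ sgn = -1 →
      eigQuad ((n : ℝ) * (pin + pout - 2 * τ) / 2) lam (lam * (1 - (m : ℝ) / (n : ℝ)))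
          (eigRoot ((n : ℝ) * (pin + pout - 2 * τ) / 2) lam ((m : ℝ) / (n : ℝ)) sgn) = 0
      ∧ eigQuad ((n : ℝ) * (pin - pout) / 2) lam (lam * (1 - (m : ℝ) / (n : ℝ)))
          (eigRoot ((n : ℝ) * (pin - pout) / 2) lam ((m : ℝ) / (n : ℝ)) sgn) = 0)
    ∧
    (∀ sgn : ℝ,
      eigRoot ((n : ℝ) * (pin - pout) / 2) lam ((m : ℝ) / (n : ℝ)) sgn
        = (1 / 2) * ((n : ℝ) * (pin - pout) / 2 - lam
            + sgn * Real.sqrt ((lam + (n : ℝ) * (pin - pout) / 2) ^ 2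
                - 4 * ((n : ℝ) * (pin - pout) / 2) * lam * ((m : ℝ) / (n : ℝ))))) := by
  have hn0 : (0:ℝ) < n := by positivity
  have hn0' : (n:ℝ) ≠ 0 := ne_of_gt hn0
  have hr0 : 0 ≤ (m:ℝ)/(n:ℝ) := by positivity
  have hr1 : (m:ℝ)/(n:ℝ) ≤ 1 := by
    rw [div_le_one hn0]; exact_mod_cast Nat.le_of_lt (by omega)
  refine ⟨?_, ⟨disc_nonneg _ _ _ hr0 hr1, disc_nonneg _ _ _ hr0 hr1⟩,
    fun sgn h => ⟨eigQuad_eigRoot _ _ _ hr0 hr1 sgn h, eigQuad_eigRoot _ _ _ hr0 hr1 sgn h⟩,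
    fun sgn => rfl⟩
  -- ===== Conjunct 1 =====
  set αv := (n : ℝ) * (pin - pout) / 2 with hαv
  set rr := (m : ℝ) / (n : ℝ) with hrr
  set c1 := (n : ℝ) * (pin + pout - 2 * τ) / 2 with hc1
  set x1p := αv - eigRoot c1 lam rr 1 with hx1p
  set x1m := αv - eigRoot c1 lam rr (-1) with hx1m
  set x2p := αv - eigRoot αv lam rr 1 with hx2p
  set x2m := αv - eigRoot αv lam rr (-1) with hx2m
  set N := (αv • (1 : Matrix (Fin n) (Fin n) ℝ)
      - Matrix.of (fun i j => (if σ0 i = σ0 j then pin else pout) - τ)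
      + lam • Matrix.diagonal (fun i : Fin n =>
          if (i : ℕ) < m / 2 ∨ n - m / 2 ≤ (i : ℕ) then (1 : ℝ) else 0)) with hN
  have hm2d : m / 2 * 2 = m := Nat.div_mul_cancel hmeven.two_dvd
  have hn2d : n / 2 * 2 = n := Nat.div_mul_cancel hneven.two_dvd
  set pgoal := ((X - C αv) ^ (n - m - 2) * (X - C (αv + lam)) ^ (m - 2)
      * ((X - C x1p) * (X - C x1m)) * ((X - C x2p) * (X - C x2m)) : Polynomial ℝ) with hpgoal
  have key : N.charpoly = pgoal := by
    have hφinj : Function.Injective (algebraMap (Polynomial ℝ) (RatFunc ℝ)) :=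
      RatFunc.algebraMap_injective ℝ
    set φ := algebraMap (Polynomial ℝ) (RatFunc ℝ) with hφ
    set cRe := φ.comp (Polynomial.C : ℝ →+* Polynomial ℝ) with hcRe
    set xK := φ X with hxK
    have hφsub : ∀ z : ℝ, φ (X - C z) = xK - cRe z := fun z => by rw [map_sub]; rfl
    have hφC : ∀ z : ℝ, φ (C z) = cRe z := fun z => rfl
    set y0 := xK - cRe αv with hy0d
    set y1 := xK - cRe (αv + lam) with hy1d
    have hy0 : y0 ≠ 0 := by
      intro h
      have h2 : φ (X - C αv) = φ 0 := by rw [map_zero, hφsub]; exact h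
      exact X_sub_C_ne_zero αv (hφinj h2)
    have hy1 : y1 ≠ 0 := by
      intro h
      have h2 : φ (X - C (αv + lam)) = φ 0 := by rw [map_zero, hφsub]; exact h
      exact X_sub_C_ne_zero _ (hφinj h2)
    set ddN := (fun i : ℕ => if i < m / 2 ∨ n - m / 2 ≤ i then y1 else y0) with hdd
    have hddne : ∀ i : ℕ, ddN i ≠ 0 := by
      intro i; rw [hdd]; dsimp only; split_ifs; exacts [hy1, hy0]
    set uN := (fun i : ℕ => if i < n / 2 then (1 : RatFunc ℝ) else 0) with huN
    set vN := (fun i : ℕ => if i < n / 2 then (0 : RatFunc ℝ) else 1) with hvN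
    set ca := cRe (pin - τ) with hca
    set cb := cRe (pout - τ) with hcb
    set D := (Matrix.diagonal (fun i : Fin n => ddN (i : ℕ))) with hD
    set Dinv := (Matrix.diagonal (fun i : Fin n => (ddN (i : ℕ))⁻¹)) with hDinvd
    set U := (Matrix.of fun (i : Fin n) (k : Fin 2) =>
        if k = 0 then uN (i : ℕ) else vN (i : ℕ)) with hU
    set V := (Matrix.of fun (k : Fin 2) (j : Fin n) =>
        if k = 0 then ca * uN (j : ℕ) + cb * vN (j : ℕ)
        else cb * uN (j : ℕ) + ca * vN (j : ℕ)) with hV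
    have hσiff : ∀ i j : Fin n, (σ0 i = σ0 j) ↔ (((i:ℕ) < n/2) ↔ ((j:ℕ) < n/2)) := by
      intro i j; rw [hσ0 i, hσ0 j]
      by_cases h1 : (i:ℕ) < n/2 <;> by_cases h2 : (j:ℕ) < n/2 <;> simp [h1, h2] <;> norm_num
    have hA : (charmatrix N).map φ = D + U * V := by
      ext i j
      rw [Matrix.map_apply, charmatrix_apply, Matrix.add_apply, Matrix.mul_apply,
        Fin.sum_univ_two, hN, hD, hU, hV]
      by_cases hij : i = j
      · subst hij
        by_cases hLi : (i:ℕ) < m/2 ∨ n - m/2 ≤ (i:ℕ) <;> by_cases hci : (i:ℕ) < n/2 <;>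
          (simp only [Matrix.diagonal_apply_eq, Matrix.add_apply, Matrix.sub_apply,
            Matrix.smul_apply, Matrix.one_apply_eq, Matrix.of_apply, smul_eq_mul, hLi, hci,
            if_true, if_false, eq_self_iff_true, ite_true, ite_false, one_ne_zero,
            Fin.isValue, one_ne_zero]
           rw [hφsub]
           simp only [hdd, huN, hvN, hca, hcb, hy0d, hy1d, hLi, hci, if_true, if_false,
             ite_true, ite_false, map_sub, map_add, _root_.map_mul, _root_.map_one, map_zero, hφC,
             RingHom.coe_comp, Function.comp_apply]
           ring)
      · have hσ := hσiff i j
        by_cases hci : (i:ℕ) < n/2 <;> by_cases hcj : (j:ℕ) < n/2 <;>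
          (simp only [Matrix.diagonal_apply_ne _ hij, Matrix.add_apply, Matrix.sub_apply,
            Matrix.smul_apply, Matrix.one_apply_ne hij, Matrix.of_apply, smul_eq_mul,
            hσ, hci, hcj, if_true, if_false, eq_self_iff_true, ite_true, ite_false,
            iff_true, iff_false, one_ne_zero, Fin.isValue, not_true, not_false_iff]
           simp only [hdd, huN, hvN, hca, hcb, hci, hcj, if_true, if_false, ite_true, ite_false,
             map_sub, map_add, _root_.map_mul, _root_.map_one, map_zero, map_neg, zero_sub, hφC,
             RingHom.coe_comp, Function.comp_apply]
           ring)
    have hDD : D * Dinv = 1 := by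
      rw [hD, hDinvd, Matrix.diagonal_mul_diagonal]
      have hone : (fun i : Fin n => ddN (i:ℕ) * (ddN (i:ℕ))⁻¹) = fun _ => 1 :=
        funext fun i => mul_inv_cancel₀ (hddne i)
      rw [hone, Matrix.diagonal_one]
    have hdetA : ((charmatrix N).map φ).det
        = D.det * (1 + V * (Dinv * U)).det := by
      rw [hA]
      have hsplit : D + U * V = D * (1 + Dinv * (U * V)) := by
        rw [Matrix.mul_add, Matrix.mul_one, ← Matrix.mul_assoc, hDD, Matrix.one_mul]
      rw [hsplit, Matrix.det_mul]
      congr 1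
      rw [← Matrix.mul_assoc]
      exact Matrix.det_one_add_mul_comm (Dinv * U) V
    have hdetD : D.det = y1 ^ m * y0 ^ (n - m) := by
      rw [hD, Matrix.det_diagonal, Fin.prod_univ_eq_prod_range (fun i => ddN i) n,
        prod_range_segments n (m/2) (n/2) (n - m/2) (by omega) (by omega) (by omega)
          (fun i => ddN i) y1 y0 y0 y1
          (fun i hi => by simp only [hdd]; exact if_pos (Or.inl hi))
          (fun i h1 h2 => by simp only [hdd]; exact if_neg (by omega))
          (fun i h1 h2 => by simp only [hdd]; exact if_neg (by omega))
          (fun i h1 h2 => by simp only [hdd]; exact if_pos (Or.inr (by omega)))]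
      calc y1 ^ (m/2) * y0 ^ (n/2 - m/2) * y0 ^ (n - m/2 - n/2) * y1 ^ (n - (n - m/2))
          = y1 ^ (m/2 + (n - (n - m/2))) * y0 ^ ((n/2 - m/2) + (n - m/2 - n/2)) := by
            rw [pow_add, pow_add]; ring
        _ = y1 ^ m * y0 ^ (n - m) := by
            rw [show m/2 + (n - (n - m/2)) = m from by omega,
              show (n/2 - m/2) + (n - m/2 - n/2) = n - m from by omega]
    set f := ((m/2 : ℕ) : RatFunc ℝ) * y1⁻¹ + ((n/2 - m/2 : ℕ) : RatFunc ℝ) * y0⁻¹ with hf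
    have hVDU : ∀ k l : Fin 2, (V * (Dinv * U)) k l
        = ∑ i ∈ Finset.range n,
            (fun i : ℕ => (if k = 0 then ca * uN i + cb * vN i else cb * uN i + ca * vN i)
              * ((ddN i)⁻¹ * (if l = 0 then uN i else vN i))) i := by
      intro k l
      rw [← Fin.sum_univ_eq_sum_range, Matrix.mul_apply]
      apply Finset.sum_congr rfl
      intro x _
      rw [hDinvd, Matrix.diagonal_mul, hU, hV]
      simp only [Matrix.of_apply]
    have hW00 : (V * (Dinv * U)) 0 0 = ca * f := by
      rw [hVDU 0 0, sum_range_segments n (m/2) (n/2) (n - m/2) (by omega) (by omega) (by omega)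
        _ (ca * y1⁻¹) (ca * y0⁻¹) 0 0
        (fun i hi => by
          have h1 : i < n/2 := by omega
          simp only [hdd, huN, hvN, if_pos h1, if_pos (Or.inl hi : i < m/2 ∨ n - m/2 ≤ i),
            if_pos rfl, if_true, if_false]
          ring)
        (fun i ha hb => by
          simp only [hdd, huN, hvN, if_pos hb, if_neg (show ¬(i < m/2 ∨ n - m/2 ≤ i) by omega),
            if_pos rfl, if_true, if_false]
          ring)
        (fun i ha hb => by
          have h1 : ¬ i < n/2 := by omega
          simp only [hdd, huN, hvN, if_neg h1, if_pos rfl, if_true, if_false]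
          ring)
        (fun i ha hb => by
          have h1 : ¬ i < n/2 := by omega
          simp only [hdd, huN, hvN, if_neg h1, if_pos rfl, if_true, if_false]
          ring)]
      simp only [smul_zero, add_zero, nsmul_eq_mul, hf]
      ring
    have hW01 : (V * (Dinv * U)) 0 1 = cb * f := by
      rw [hVDU 0 1, sum_range_segments n (m/2) (n/2) (n - m/2) (by omega) (by omega) (by omega)
        _ 0 0 (cb * y0⁻¹) (cb * y1⁻¹)
        (fun i hi => by
          have h1 : i < n/2 := by omega
          simp only [hdd, huN, hvN, if_pos h1, if_pos rfl,
            if_neg (show ¬(1:Fin 2) = 0 by decide), if_true, if_false]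
          ring)
        (fun i ha hb => by
          simp only [hdd, huN, hvN, if_pos hb, if_pos rfl,
            if_neg (show ¬(1:Fin 2) = 0 by decide), if_true, if_false]
          ring)
        (fun i ha hb => by
          have h1 : ¬ i < n/2 := by omega
          simp only [hdd, huN, hvN, if_neg h1, if_pos rfl,
            if_neg (show ¬(1:Fin 2) = 0 by decide),
            if_neg (show ¬(i < m/2 ∨ n - m/2 ≤ i) by omega), if_true, if_false]
          ring)
        (fun i ha hb => by
          have h1 : ¬ i < n/2 := by omega
          simp only [hdd, huN, hvN, if_neg h1, if_pos rfl,
            if_neg (show ¬(1:Fin 2) = 0 by decide),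
            if_pos (Or.inr (show n - m/2 ≤ i by omega) : i < m/2 ∨ n - m/2 ≤ i), if_true, if_false]
          ring)]
      rw [show n - m/2 - n/2 = n/2 - m/2 from by omega, show n - (n - m/2) = m/2 from by omega]
      simp only [smul_zero, zero_add, nsmul_eq_mul, hf]
      ring
    have hW10 : (V * (Dinv * U)) 1 0 = cb * f := by
      rw [hVDU 1 0, sum_range_segments n (m/2) (n/2) (n - m/2) (by omega) (by omega) (by omega)
        _ (cb * y1⁻¹) (cb * y0⁻¹) 0 0
        (fun i hi => by
          have h1 : i < n/2 := by omega
          simp only [hdd, huN, hvN, if_pos h1, if_pos (Or.inl hi : i < m/2 ∨ n - m/2 ≤ i),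
            if_pos rfl, if_neg (show ¬(1:Fin 2) = 0 by decide), if_true, if_false]
          ring)
        (fun i ha hb => by
          simp only [hdd, huN, hvN, if_pos hb, if_neg (show ¬(i < m/2 ∨ n - m/2 ≤ i) by omega),
            if_pos rfl, if_neg (show ¬(1:Fin 2) = 0 by decide), if_true, if_false]
          ring)
        (fun i ha hb => by
          have h1 : ¬ i < n/2 := by omega
          simp only [hdd, huN, hvN, if_neg h1, if_pos rfl,
            if_neg (show ¬(1:Fin 2) = 0 by decide), if_true, if_false]
          ring)
        (fun i ha hb => by
          have h1 : ¬ i < n/2 := by omega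
          simp only [hdd, huN, hvN, if_neg h1, if_pos rfl,
            if_neg (show ¬(1:Fin 2) = 0 by decide), if_true, if_false]
          ring)]
      simp only [smul_zero, add_zero, nsmul_eq_mul, hf]
      ring
    have hW11 : (V * (Dinv * U)) 1 1 = ca * f := by
      rw [hVDU 1 1, sum_range_segments n (m/2) (n/2) (n - m/2) (by omega) (by omega) (by omega)
        _ 0 0 (ca * y0⁻¹) (ca * y1⁻¹)
        (fun i hi => by
          have h1 : i < n/2 := by omega
          simp only [hdd, huN, hvN, if_pos h1, if_neg (show ¬(1:Fin 2) = 0 by decide), if_true, if_false]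
          ring)
        (fun i ha hb => by
          simp only [hdd, huN, hvN, if_pos hb, if_neg (show ¬(1:Fin 2) = 0 by decide), if_true, if_false]
          ring)
        (fun i ha hb => by
          have h1 : ¬ i < n/2 := by omega
          simp only [hdd, huN, hvN, if_neg h1, if_neg (show ¬(1:Fin 2) = 0 by decide),
            if_neg (show ¬(i < m/2 ∨ n - m/2 ≤ i) by omega), if_true, if_false]
          ring)
        (fun i ha hb => by
          have h1 : ¬ i < n/2 := by omega
          simp only [hdd, huN, hvN, if_neg h1, if_neg (show ¬(1:Fin 2) = 0 by decide),
            if_pos (Or.inr (show n - m/2 ≤ i by omega) : i < m/2 ∨ n - m/2 ≤ i), if_true, if_false]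
          ring)]
      rw [show n - m/2 - n/2 = n/2 - m/2 from by omega, show n - (n - m/2) = m/2 from by omega]
      simp only [smul_zero, zero_add, nsmul_eq_mul, hf]
      ring
    have hdet2 : (1 + V * (Dinv * U)).det
        = (1 + ca * f) * (1 + ca * f) - cb * f * (cb * f) := by
      rw [Matrix.det_fin_two]
      simp only [Matrix.add_apply, Matrix.one_apply_eq,
        Matrix.one_apply_ne (show (0:Fin 2) ≠ 1 by decide),
        Matrix.one_apply_ne (show (1:Fin 2) ≠ 0 by decide), hW00, hW01, hW10, hW11]
      ring
    -- quadratic factorizations in ℝ[X]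
    have hadd1 := eigRoot_add c1 lam rr
    have hmul1 := eigRoot_mul c1 lam rr hr0 hr1
    have hadd2 := eigRoot_add αv lam rr
    have hmul2 := eigRoot_mul αv lam rr hr0 hr1
    have hs1 : x1p + x1m = αv + (αv + lam) - (pin + pout - 2*τ) * (m:ℝ) / 2
        - (pin + pout - 2*τ) * ((n:ℝ) - (m:ℝ)) / 2 := by
      rw [hx1p, hx1m]
      linear_combination (-1 : ℝ) * hadd1 + (-1 : ℝ) * hc1
    have hkey1 : x1p * x1m = αv^2 - αv*(c1 - lam) + c1*lam*(rr - 1) := by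
      rw [hx1p, hx1m]
      linear_combination (-αv) * hadd1 + hmul1
    have hpr1 : x1p * x1m = αv*(αv+lam) - ((pin + pout - 2*τ) * (m:ℝ) / 2)*αv
        - ((pin + pout - 2*τ) * ((n:ℝ) - (m:ℝ)) / 2)*(αv+lam) := by
      rw [hkey1, hc1, hrr]
      field_simp
      ring
    have hs2 : x2p + x2m = αv + (αv + lam) - (pin - pout) * (m:ℝ) / 2
        - (pin - pout) * ((n:ℝ) - (m:ℝ)) / 2 := by
      rw [hx2p, hx2m]
      linear_combination (-1 : ℝ) * hadd2 + (-1 : ℝ) * hαv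
    have hkey2 : x2p * x2m = αv^2 - αv*(αv - lam) + αv*lam*(rr - 1) := by
      rw [hx2p, hx2m]
      linear_combination (-αv) * hadd2 + hmul2
    have hpr2 : x2p * x2m = αv*(αv+lam) - ((pin - pout) * (m:ℝ) / 2)*αv
        - ((pin - pout) * ((n:ℝ) - (m:ℝ)) / 2)*(αv+lam) := by
      rw [hkey2, hrr, hαv]
      field_simp
      ring
    have hquad1 : ((X - C x1p) * (X - C x1m) : Polynomial ℝ)
        = (X - C αv) * (X - C (αv + lam))
          + C ((pin + pout - 2*τ) * (m:ℝ) / 2) * (X - C αv)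
          + C ((pin + pout - 2*τ) * ((n:ℝ) - (m:ℝ)) / 2) * (X - C (αv + lam)) := by
      rw [quad_factor x1p x1m _ _ hs1 hpr1]
      simp only [map_add, map_sub, _root_.map_mul]
      ring
    have hquad2 : ((X - C x2p) * (X - C x2m) : Polynomial ℝ)
        = (X - C αv) * (X - C (αv + lam))
          + C ((pin - pout) * (m:ℝ) / 2) * (X - C αv)
          + C ((pin - pout) * ((n:ℝ) - (m:ℝ)) / 2) * (X - C (αv + lam)) := by
      rw [quad_factor x2p x2m _ _ hs2 hpr2]
      simp only [map_add, map_sub, _root_.map_mul]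
      ring
    -- cast facts
    have hcast1 : ((m/2 : ℕ) : RatFunc ℝ) = cRe ((m:ℝ)/2) := by
      rw [← map_natCast cRe (m/2)]
      congr 1
      have h2 : ((m/2 : ℕ) : ℝ) * 2 = (m : ℝ) := by exact_mod_cast hm2d
      linarith
    have hcast2 : ((n/2 - m/2 : ℕ) : RatFunc ℝ) = cRe (((n:ℝ) - (m:ℝ))/2) := by
      rw [← map_natCast cRe (n/2 - m/2)]
      congr 1
      have hmn' : m ≤ n := by omega
      have h2 : ((n/2 - m/2 : ℕ) : ℝ) * 2 = (n : ℝ) - (m : ℝ) := by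
        have hnat : (n/2 - m/2) * 2 = n - m := by omega
        calc ((n/2 - m/2 : ℕ) : ℝ) * 2 = (((n/2 - m/2) * 2 : ℕ) : ℝ) := by push_cast; ring
          _ = ((n - m : ℕ) : ℝ) := by rw [hnat]
          _ = (n:ℝ) - (m:ℝ) := by rw [Nat.cast_sub hmn']
      linarith
    have hpm : y1^m = y1^(m-2) * y1^2 := by rw [← pow_add]; congr 1; omega
    have hp0 : y0^(n-m) = y0^(n-m-2) * y0^2 := by rw [← pow_add]; congr 1; omega
    have hf1 : y1 * y0 * f = ((m/2 : ℕ) : RatFunc ℝ) * y0 + ((n/2 - m/2 : ℕ) : RatFunc ℝ) * y1 := by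
      rw [hf]; field_simp
    have hcore : y1^2 * y0^2 * ((1 + ca*f)*(1 + ca*f) - cb*f*(cb*f))
        = (y0*y1 + cRe ((pin + pout - 2*τ) * (m:ℝ) / 2) * y0
            + cRe ((pin + pout - 2*τ) * ((n:ℝ) - (m:ℝ)) / 2) * y1)
          * (y0*y1 + cRe ((pin - pout) * (m:ℝ) / 2) * y0
            + cRe ((pin - pout) * ((n:ℝ) - (m:ℝ)) / 2) * y1) := by
      have e : y1^2 * y0^2 * ((1 + ca*f)*(1 + ca*f) - cb*f*(cb*f))
          = (y1*y0 + ca*(y1*y0*f))*(y1*y0 + ca*(y1*y0*f))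
            - (cb*(y1*y0*f))*(cb*(y1*y0*f)) := by ring
      rw [e, hf1, hcast1, hcast2, hca, hcb]
      simp only [map_add, map_sub, _root_.map_mul, map_div₀, map_ofNat, map_natCast]
      ring
    have hL : φ N.charpoly
        = y0^(n-m-2) * y1^(m-2)
          * ((y0*y1 + cRe ((pin + pout - 2*τ) * (m:ℝ) / 2) * y0
              + cRe ((pin + pout - 2*τ) * ((n:ℝ) - (m:ℝ)) / 2) * y1)
            * (y0*y1 + cRe ((pin - pout) * (m:ℝ) / 2) * y0
              + cRe ((pin - pout) * ((n:ℝ) - (m:ℝ)) / 2) * y1)) := by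
      have h1 : φ N.charpoly = ((charmatrix N).map φ).det := RingHom.map_det φ (charmatrix N)
      rw [h1, hdetA, hdetD, hdet2, hpm, hp0, ← hcore]
      ring
    have hR : φ pgoal
        = y0^(n-m-2) * y1^(m-2)
          * ((y0*y1 + cRe ((pin + pout - 2*τ) * (m:ℝ) / 2) * y0
              + cRe ((pin + pout - 2*τ) * ((n:ℝ) - (m:ℝ)) / 2) * y1)
            * (y0*y1 + cRe ((pin - pout) * (m:ℝ) / 2) * y0
              + cRe ((pin - pout) * ((n:ℝ) - (m:ℝ)) / 2) * y1)) := by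
      rw [hpgoal, hquad1, hquad2]
      simp only [_root_.map_mul, map_pow, map_add, map_sub, map_neg, hφC, ← hxK]
      rw [hy0d, hy1d]
      simp only [map_add, map_sub]
      ring
    exact hφinj (hL.trans hR.symm)
  rw [key, hpgoal]
  have hXC : ∀ z : ℝ, (X - C z : Polynomial ℝ) ≠ 0 := fun z => X_sub_C_ne_zero z
  have h1 : ((X - C αv) ^ (n - m - 2) : Polynomial ℝ) ≠ 0 := pow_ne_zero _ (hXC _)
  have h2 : ((X - C (αv + lam)) ^ (m - 2) : Polynomial ℝ) ≠ 0 := pow_ne_zero _ (hXC _)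
  have hq1 : ((X - C x1p) * (X - C x1m) : Polynomial ℝ) ≠ 0 := mul_ne_zero (hXC _) (hXC _)
  have hq2 : ((X - C x2p) * (X - C x2m) : Polynomial ℝ) ≠ 0 := mul_ne_zero (hXC _) (hXC _)
  rw [roots_mul (mul_ne_zero (mul_ne_zero (mul_ne_zero h1 h2) hq1) hq2),
    roots_mul (mul_ne_zero (mul_ne_zero h1 h2) hq1),
    roots_mul (mul_ne_zero h1 h2),
    roots_mul hq1, roots_mul hq2,
    roots_pow, roots_pow, roots_X_sub_C, roots_X_sub_C, roots_X_sub_C, roots_X_sub_C,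
    roots_X_sub_C, roots_X_sub_C, Multiset.nsmul_singleton, Multiset.nsmul_singleton]
  simp only [Multiset.insert_eq_cons, ← Multiset.singleton_add, add_assoc]

end
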